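/- The symmetric 4×4 matrix g with rows g = [[1, −2z, x¹, x²],[−2z, 1+4z²+((x¹)²+(x²)²)/4, x²/2−2zx¹, −x¹/2−2zx²],[x¹, x²/2−2zx¹, 1+(x¹)², x¹x²],[x², −x¹/2−2zx², x¹x², 1+(x²)²]] is positive definite for all values of (z, x¹, x²) ∈ ℝ³. -/

import Mathlib

noncomputable section

/-- The symmetric 4×4 matrix `g^{μν}` (indices ordered `a, z, x¹, x²`). -/
def gMetric (z x1 x2 : ℝ) : Matrix (Fin 4) (Fin 4) ℝ :=
  !![1, -2 * z, x1, x2;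
     -2 * z, 1 + 4 * z ^ 2 + (x1 ^ 2 + x2 ^ 2) / 4, x2 / 2 - 2 * z * x1, -x1 / 2 - 2 * z * x2;
     x1, x2 / 2 - 2 * z * x1, 1 + x1 ^ 2, x1 * x2;
     x2, -x1 / 2 - 2 * z * x2, x1 * x2, 1 + x2 ^ 2]

/-! Completing squares, the quadratic form of `g` at `v = (p, q, r, s)` is
`(p - 2zq + x¹r + x²s)² + q² + (r + x²q/2)² + (s - x¹q/2)²`, i.e. `g = Bᵀ B` where the rows of
`B` are the four linear forms being squared. Since `det B = 1`, `g` is the Gram matrix of a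
basis, hence positive definite. -/

open Matrix

theorem Matrix.PosDef.conjTranspose_mul_self_of_isUnit_det {n K : Type*} [Fintype n]
    [DecidableEq n] [Field K] [PartialOrder K] [StarRing K] [StarOrderedRing K]
    {A : Matrix n n K} (hA : IsUnit A.det) : (Aᴴ * A).PosDef :=
  .conjTranspose_mul_self A <| mulVec_injective_iff_isUnit.2 <| (isUnit_iff_isUnit_det A).2 hA

def gMetricFactor (z x1 x2 : ℝ) : Matrix (Fin 4) (Fin 4) ℝ :=
  !![1, -2 * z, x1, x2;
     0, 1, 0, 0;
     0, x2 / 2, 1, 0;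
     0, -x1 / 2, 0, 1]

theorem gMetric_eq_conjTranspose_mul_self (z x1 x2 : ℝ) :
    gMetric z x1 x2 = (gMetricFactor z x1 x2)ᴴ * gMetricFactor z x1 x2 := by
  ext i j
  fin_cases i <;> fin_cases j <;>
    simp [gMetric, gMetricFactor, Matrix.mul_apply, Fin.sum_univ_four] <;> ring

theorem det_gMetricFactor (z x1 x2 : ℝ) : (gMetricFactor z x1 x2).det = 1 := by
  simp [gMetricFactor, Matrix.det_succ_column_zero, Fin.sum_univ_succ]

/-- the matrix `g` is positive definite for all `(z, x¹, x²) ∈ ℝ³`. -/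
theorem gMetric_posDef (z x1 x2 : ℝ) : (gMetric z x1 x2).PosDef := by
  rw [gMetric_eq_conjTranspose_mul_self]
  exact .conjTranspose_mul_self_of_isUnit_det <| by simp [det_gMetricFactor]
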